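/- If $P$ and $Q$ are finite subsets of a metric space with Hausdorff distance at most $\epsilon$, then for every $t \ge 0$ and every simplex $\sigma \in \mathrm{VR}_t(P)$, there is a choice, for each point of $\sigma$, of a point of $Q$ within distance $\epsilon$, such that the resulting subset of $Q$ is a simplex of $\mathrm{VR}_{t+2\epsilon}(Q)$. -/
import Mathlib


/-- The Vietoris–Rips complex of a finite set `P` in a metric space at scale `t`:
all nonempty subsets of `P` with pairwise distances at most `t`. -/
def VietorisRips {X : Type*} [MetricSpace X] (P : Finset X) (t : ℝ) : Set (Finset X) :=
  {σ | σ.Nonempty ∧ ↑σ ⊆ (P : Set X) ∧ ∀ x ∈ σ, ∀ y ∈ σ, dist x y ≤ t}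

theorem vietorisRips_interleaving {X : Type*} [MetricSpace X] [DecidableEq X]
    (P Q : Finset X) {ε : ℝ}
    (hPQ : ∀ p ∈ P, ∃ q ∈ Q, dist p q ≤ ε) (hQP : ∀ q ∈ Q, ∃ p ∈ P, dist q p ≤ ε)
    {t : ℝ} (ht : 0 ≤ t) :
    ∀ σ ∈ VietorisRips P t, ∃ g : X → X,
      (∀ x ∈ σ, g x ∈ Q ∧ dist x (g x) ≤ ε) ∧
      σ.image g ∈ VietorisRips Q (t + 2 * ε) := by
  classical
  rintro σ ⟨hne, hsub, hdist⟩
  choose! f hfQ hfd using hPQ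
  refine ⟨f, fun x hx => ⟨hfQ x (hsub hx), hfd x (hsub hx)⟩, ?_, ?_, ?_⟩
  · exact hne.image f
  · intro y hy
    simp only [Finset.coe_image, Set.mem_image] at hy
    obtain ⟨x, hx, rfl⟩ := hy
    exact hfQ x (hsub hx)
  · intro a ha b hb
    simp only [Finset.mem_image] at ha hb
    obtain ⟨x, hx, rfl⟩ := ha
    obtain ⟨y, hy, rfl⟩ := hb
    calc dist (f x) (f y) ≤ dist (f x) x + dist x y + dist y (f y) := dist_triangle4 _ _ _ _
    _ ≤ ε + t + ε := by
        gcongr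
        · rw [dist_comm]; exact hfd x (hsub hx)
        · exact hdist x hx y hy
        · exact hfd y (hsub hy)
    _ = t + 2 * ε := by ring
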